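/- arXiv:math/0612136 — 2 statements merged into one kernel-verified Lean document; each statement's English description precedes it below -/
import Mathlib

section
/- Under the hypotheses of the Liouville formula (V continuous, uniformly Lipschitz in space on [0,ε], with continuous spatial derivative D_xV, flow T_t whose spatial derivative M(t) = D_X T_t(X) solves the variational equation M'(t) = D_xV(t,T_t(X)) ∘ M(t), M(0) = I), the Jacobian J_t(X) := det(D_X T_t(X)) satisfies J_t(X) = exp(∫₀ᵗ (div V)(s, T_s(X)) ds) for all t ∈ [0,ε] and X ∈ ℝ^N; in particular J_t(X) > 0 for every t ∈ [0,ε] and every X ∈ ℝ^N. -/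
/-!
Write `M(t) = D_X T_t(X)` and `A(t) = D_xV(t, T_t(X))`, so that `M' = A M`. By the Leibniz
expansion, `(det M)'` is the sum over `i` of the determinants of `M` with its `i`-th row replaced
by that of `A M`. That row is `∑ₖ Aᵢₖ Mₖ`, a combination of the rows of `M`, so the `i`-th
determinant is `Aᵢᵢ det M`. Hence `J' = (div V) J` with `J_0 = 1`, and `J e^{-∫ div V}` has zero
derivative, which gives `J_t = exp ∫₀ᵗ div V > 0`.
-/

open Set

namespace Matrix

open Finset

variable {n R : Type*} [Fintype n] [DecidableEq n] [CommRing R]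

theorem det_updateRow_eq_sum_perm (M : Matrix n n R) (i : n) (r : n → R) :
    (M.updateRow i r).det = ∑ σ : Equiv.Perm n,
      ((Equiv.Perm.sign σ : ℤ) : R) * (r (σ i) * ∏ j ∈ univ.erase i, M j (σ j)) := by
  rw [← det_transpose, det_apply']
  refine sum_congr rfl fun σ _ => ?_
  rw [← mul_prod_erase univ _ (mem_univ i)]
  congr 2
  · simp
  · exact prod_congr rfl fun j hj => by simp [updateRow_ne (ne_of_mem_erase hj)]

theorem sum_det_updateRow_mul (A M : Matrix n n R) :
    ∑ i, (M.updateRow i ((A * M) i)).det = A.trace * M.det := by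
  have hrow : ∀ i, (A * M) i = ∑ k, A i k • M k := fun i => by
    ext j; simp [mul_apply]
  simp only [hrow, det_updateRow_sum, trace, diag, smul_eq_mul, sum_mul]

theorem hasDerivWithinAt_det {𝕜 : Type*} [NontriviallyNormedField 𝕜] {m : 𝕜 → Matrix n n 𝕜}
    {m' : Matrix n n 𝕜} {s : Set 𝕜} {t : 𝕜}
    (h : ∀ i j, HasDerivWithinAt (fun u => m u i j) (m' i j) s t) :
    HasDerivWithinAt (fun u => (m u).det) (∑ i, ((m t).updateRow i (m' i)).det) s t := by
  have hleibniz : (fun u => (m u).det) = fun u => ∑ σ : Equiv.Perm n,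
      ((Equiv.Perm.sign σ : ℤ) : 𝕜) * ∏ j, m u j (σ j) := by
    funext u
    rw [← det_transpose, det_apply']
    rfl
  rw [hleibniz]
  refine (HasDerivWithinAt.fun_sum fun σ _ =>
    (HasDerivWithinAt.fun_finsetProd fun j _ => h j (σ j)).const_mul _).congr_deriv ?_
  simp only [det_updateRow_eq_sum_perm, smul_eq_mul, mul_sum]
  rw [sum_comm]
  exact sum_congr rfl fun σ _ => sum_congr rfl fun i _ => by ring

end Matrix

theorem hasDerivWithinAt_det_of_hasDerivWithinAt_comp {𝕜 E : Type*} [NontriviallyNormedField 𝕜]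
    [CompleteSpace 𝕜] [NormedAddCommGroup E] [NormedSpace 𝕜 E] [FiniteDimensional 𝕜 E]
    {M : 𝕜 → E →L[𝕜] E} {A : E →L[𝕜] E} {s : Set 𝕜} {t : 𝕜} (h : HasDerivWithinAt M (A.comp (M t)) s t) :
    HasDerivWithinAt (fun u => LinearMap.det (M u : E →ₗ[𝕜] E))
      (LinearMap.trace 𝕜 E A * LinearMap.det (M t : E →ₗ[𝕜] E)) s t := by
  let b := Module.finBasis 𝕜 E
  have hentry : ∀ i j, HasDerivWithinAt (fun u => LinearMap.toMatrix b b (M u) i j)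
      ((LinearMap.toMatrix b b A * LinearMap.toMatrix b b (M t)) i j) s t := by
    intro i j
    let φ : (E →L[𝕜] E) →L[𝕜] 𝕜 :=
      (LinearMap.toContinuousLinearMap (b.coord i)).comp (ContinuousLinearMap.apply 𝕜 E (b j))
    rw [← LinearMap.toMatrix_comp]
    simp only [LinearMap.toMatrix_apply]
    exact φ.hasFDerivAt.comp_hasDerivWithinAt t h
  simpa only [Matrix.sum_det_updateRow_mul, LinearMap.det_toMatrix,
    ← LinearMap.trace_eq_matrix_trace] using Matrix.hasDerivWithinAt_det hentry

theorem eq_mul_exp_integral_of_hasDerivWithinAt {a b : ℝ} {f g : ℝ → ℝ}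
    (hg : ContinuousOn g (Icc a b))
    (hf : ∀ t ∈ Icc a b, HasDerivWithinAt f (g t * f t) (Icc a b) t) :
    ∀ t ∈ Icc a b, f t = f a * Real.exp (∫ s in a..t, g s) := by
  set G : ℝ → ℝ := fun u => ∫ s in a..u, g s
  have hG : ∀ t ∈ Icc a b, HasDerivWithinAt G (g t) (Icc a b) t := by
    intro t ht
    have := Fact.mk ht
    apply intervalIntegral.integral_hasDerivWithinAt_right
    · exact (hg.mono (Icc_subset_Icc le_rfl ht.2)).intervalIntegrable_of_Icc ht.1
    · exact hg.stronglyMeasurableAtFilter_nhdsWithin measurableSet_Icc t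
    · exact hg t ht
  have hF : ∀ t ∈ Icc a b,
      HasDerivWithinAt (fun u => f u * Real.exp (-G u)) 0 (Icc a b) t := by
    intro t ht
    refine ((hf t ht).fun_mul (hG t ht).fun_neg.exp).congr_deriv ?_
    ring
  intro t ht
  have hconst := Convex.norm_image_sub_le_of_norm_hasDerivWithin_le hF (fun _ _ => norm_zero.le)
    (convex_Icc a b) (left_mem_Icc.2 (ht.1.trans ht.2)) ht
  rw [zero_mul, norm_le_zero_iff, sub_eq_zero] at hconst
  simp only [G, intervalIntegral.integral_same, neg_zero, Real.exp_zero, mul_one,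
    Real.exp_neg] at hconst
  rw [← hconst, inv_mul_cancel_right₀ (Real.exp_pos _).ne']

theorem jacobian_exp_formula_pos_general
    (N : ℕ) (ε : ℝ)
    (V : ℝ → EuclideanSpace ℝ (Fin N) → EuclideanSpace ℝ (Fin N))
    (hDVcont : ContinuousOn
      (fun p : ℝ × EuclideanSpace ℝ (Fin N) => fderiv ℝ (V p.1) p.2)
      (Icc (0 : ℝ) ε ×ˢ (univ : Set (EuclideanSpace ℝ (Fin N)))))
    (T : ℝ → EuclideanSpace ℝ (Fin N) → EuclideanSpace ℝ (Fin N))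
    (hTflow : ∀ X : EuclideanSpace ℝ (Fin N), T 0 X = X ∧
      ∀ t ∈ Icc (0 : ℝ) ε,
        HasDerivWithinAt (fun s => T s X) (V t (T t X)) (Icc (0 : ℝ) ε) t)
    (hvar : ∀ X : EuclideanSpace ℝ (Fin N),
      fderiv ℝ (T 0) X = ContinuousLinearMap.id ℝ (EuclideanSpace ℝ (Fin N)) ∧
      ∀ t ∈ Icc (0 : ℝ) ε,
        HasDerivWithinAt (fun s => fderiv ℝ (T s) X)
          ((fderiv ℝ (V t) (T t X)).comp (fderiv ℝ (T t) X)) (Icc (0 : ℝ) ε) t)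
    (J : ℝ → EuclideanSpace ℝ (Fin N) → ℝ)
    (hJ : ∀ t X, J t X = LinearMap.det
      (fderiv ℝ (T t) X :
        EuclideanSpace ℝ (Fin N) →ₗ[ℝ] EuclideanSpace ℝ (Fin N))) :
    ∀ t ∈ Icc (0 : ℝ) ε, ∀ X : EuclideanSpace ℝ (Fin N),
      J t X = Real.exp (∫ s in (0 : ℝ)..t,
          LinearMap.trace ℝ (EuclideanSpace ℝ (Fin N))
            (fderiv ℝ (V s) (T s X) :
              EuclideanSpace ℝ (Fin N) →ₗ[ℝ] EuclideanSpace ℝ (Fin N))) ∧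
      0 < J t X := by
  intro t ht X
  have hTX : ContinuousOn (fun s => T s X) (Icc 0 ε) :=
    fun s hs => ((hTflow X).2 s hs).continuousWithinAt
  have hdiv : ContinuousOn (fun s => LinearMap.trace ℝ _
      (fderiv ℝ (V s) (T s X) : EuclideanSpace ℝ (Fin N) →ₗ[ℝ] _)) (Icc 0 ε) :=
    (LinearMap.continuous_of_finiteDimensional ((LinearMap.trace ℝ (EuclideanSpace ℝ (Fin N))).comp
      (ContinuousLinearMap.coeLM ℝ))).comp_continuousOn
      (hDVcont.comp (continuousOn_id.prodMk hTX) fun s hs => ⟨hs, mem_univ _⟩)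
  have hJ' : ∀ s ∈ Icc 0 ε, HasDerivWithinAt (fun u => J u X)
      (LinearMap.trace ℝ _ (fderiv ℝ (V s) (T s X) : EuclideanSpace ℝ (Fin N) →ₗ[ℝ] _) * J s X)
      (Icc 0 ε) s := by
    intro s hs
    simp only [hJ]
    exact hasDerivWithinAt_det_of_hasDerivWithinAt_comp ((hvar X).2 s hs)
  have hJ0 : J 0 X = 1 := by
    rw [hJ, (hvar X).1, ContinuousLinearMap.coe_id, LinearMap.det_id]
  have hliouville := eq_mul_exp_integral_of_hasDerivWithinAt hdiv hJ' t ht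
  rw [hJ0, one_mul] at hliouville
  exact ⟨hliouville, hliouville ▸ Real.exp_pos _⟩

/-- Liouville's formula in integrated form: the Jacobian
`J_t(X) = det (D_X T_t(X))` of the flow `T` of a time-dependent vector field
`V` satisfies `J_t(X) = exp (∫₀ᵗ (div V)(s, T_s(X)) ds)`; in particular
`J_t(X) > 0` for every `t ∈ [0, ε]` and every `X`. -/
theorem jacobian_exp_formula_pos
    (N : ℕ) (hN : 1 ≤ N) (ε : ℝ) (hε : 0 < ε)
    (V : ℝ → EuclideanSpace ℝ (Fin N) → EuclideanSpace ℝ (Fin N))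
    (hVcont : Continuous fun p : ℝ × EuclideanSpace ℝ (Fin N) => V p.1 p.2)
    (L : ℝ) (hL : 0 ≤ L)
    (hVlip : ∀ t ∈ Icc (0 : ℝ) ε, ∀ x y : EuclideanSpace ℝ (Fin N),
      ‖V t x - V t y‖ ≤ L * ‖x - y‖)
    (hVC1 : ∀ t : ℝ, ContDiff ℝ 1 (V t))
    (hDVcont : ContinuousOn
      (fun p : ℝ × EuclideanSpace ℝ (Fin N) => fderiv ℝ (V p.1) p.2)
      (Icc (0 : ℝ) ε ×ˢ (univ : Set (EuclideanSpace ℝ (Fin N)))))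
    (T : ℝ → EuclideanSpace ℝ (Fin N) → EuclideanSpace ℝ (Fin N))
    (hTflow : ∀ X : EuclideanSpace ℝ (Fin N), T 0 X = X ∧
      ∀ t ∈ Icc (0 : ℝ) ε,
        HasDerivWithinAt (fun s => T s X) (V t (T t X)) (Icc (0 : ℝ) ε) t)
    (hTdiff : ∀ t ∈ Icc (0 : ℝ) ε, Differentiable ℝ (T t))
    (hvar : ∀ X : EuclideanSpace ℝ (Fin N),
      fderiv ℝ (T 0) X = ContinuousLinearMap.id ℝ (EuclideanSpace ℝ (Fin N)) ∧
      ∀ t ∈ Icc (0 : ℝ) ε,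
        HasDerivWithinAt (fun s => fderiv ℝ (T s) X)
          ((fderiv ℝ (V t) (T t X)).comp (fderiv ℝ (T t) X)) (Icc (0 : ℝ) ε) t)
    (J : ℝ → EuclideanSpace ℝ (Fin N) → ℝ)
    (hJ : ∀ t X, J t X = LinearMap.det
      (fderiv ℝ (T t) X :
        EuclideanSpace ℝ (Fin N) →ₗ[ℝ] EuclideanSpace ℝ (Fin N))) :
    ∀ t ∈ Icc (0 : ℝ) ε, ∀ X : EuclideanSpace ℝ (Fin N),
      J t X = Real.exp (∫ s in (0 : ℝ)..t,
          LinearMap.trace ℝ (EuclideanSpace ℝ (Fin N))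
            (fderiv ℝ (V s) (T s X) :
              EuclideanSpace ℝ (Fin N) →ₗ[ℝ] EuclideanSpace ℝ (Fin N))) ∧
      0 < J t X :=
  jacobian_exp_formula_pos_general N ε V hDVcont T hTflow hvar J hJ
end

section
/- (Correa–Seeger theorem on differentiability of a minimax.) Let τ > 0, let X and Y be nonempty sets, and let 𝒢 : [0,τ] × X × Y → ℝ. For t ∈ [0,τ] define g(t) = inf_{x∈X} sup_{y∈Y} 𝒢(t,x,y) and h(t) = sup_{y∈Y} inf_{x∈X} 𝒢(t,x,y) (as extended reals, assumed finite where needed), and the sets X(t) = {x ∈ X : g(t) = sup_{y∈Y} 𝒢(t,x,y)}, Y(t) = {y ∈ Y : h(t) = inf_{x∈X} 𝒢(t,x,y)}, and S(t) = {(x,y) ∈ X × Y : g(t) = 𝒢(t,x,y) = h(t)}. Assume: (H1) S(t) ≠ ∅ for every t ∈ [0,τ]; (H2) the partial derivative ∂_t𝒢(t,x,y) exists for all t ∈ [0,τ] whenever (x,y) ∈ [⋃_{t∈[0,τ]} X(t)] × Y(0) or (x,y) ∈ X(0) × [⋃_{t∈[0,τ]} Y(t)]; (H3) there exists a topology 𝒯_X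 on X such that for every sequence (t_n) in [0,τ] with t_n → 0 there exist x⁰ ∈ X(0), a subsequence (t_{n_k}), and points x_{n_k} ∈ X(t_{n_k}) such that x_{n_k} → x⁰ in 𝒯_X and, for every y ∈ Y(0) and every sequence (s_k) in (0,τ] with s_k → 0, liminf_{k→∞} ∂_t𝒢(s_k, x_{n_k}, y) ≥ ∂_t𝒢(0, x⁰, y); (H4) there exists a topology 𝒯_Y on Y such that for every sequence (t_n) in [0,τ] with t_n → 0 there exist y⁰ ∈ Y(0), a subsequence (t_{n_k}), and points y_{n_k} ∈ Y(t_{n_k}) such that y_{n_k} → y⁰ in 𝒯_Y and, for every x ∈ X(0) and every sequence (s_k) in (0,τ] with s_k → 0, limsup_{k→∞} ∂_t𝒢(s_k, x, y_{n_k}) ≤ ∂_t𝒢(0, x, y⁰). Then the one-sided derivative dg(0) := lim_{t↓0} (g(t) − g(0))/t exists, and there exists (x⁰, y⁰) ∈ X(0) × Y(0) such that dg(0) = inf_{x∈X(0)} sup_{y∈Y(0)} ∂_t𝒢(0,x,y) = ∂_t𝒢(0, x⁰, y⁰) = sup_{y∈Y(0)} inf_{x∈X(0)} ∂_t𝒢(0,x,y);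 i.e., (x⁰, y⁰) is a saddle point of ∂_t𝒢(0,·,·) on X(0) × Y(0). -/
open Set Filter Topology

/-- Correa–Seeger theorem on the differentiability of a minimax with respect
to a parameter: under hypotheses (H1)–(H4), the one-sided derivative
`dg(0) = lim_{t↓0} (g(t) - g(0))/t` exists and there is a saddle point
`(x⁰, y⁰) ∈ X(0) × Y(0)` of `∂ₜ𝒢(0,·,·)` with
`dg(0) = inf_{X(0)} sup_{Y(0)} ∂ₜ𝒢(0,x,y) = ∂ₜ𝒢(0,x⁰,y⁰)
       = sup_{Y(0)} inf_{X(0)} ∂ₜ𝒢(0,x,y)`.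
Here `g t = ⨅ x, ⨆ y, 𝒢 t x y` and `h t = ⨆ y, ⨅ x, 𝒢 t x y` are computed in
the extended reals, `X(t)`, `Y(t)`, `S(t)` are the corresponding solution and
saddle-point sets, and `D t x y` denotes the partial derivative
`∂ₜ𝒢(t,x,y)`. -/
theorem correa_seeger_minimax_derivative
    (X Y : Type*) [Nonempty X] [Nonempty Y]
    (τ : ℝ) (hτ : 0 < τ)
    (G : ℝ → X → Y → ℝ) (D : ℝ → X → Y → ℝ)
    (g h : ℝ → EReal)
    (hg : ∀ t, g t = ⨅ x : X, ⨆ y : Y, (G t x y : EReal))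
    (hh : ∀ t, h t = ⨆ y : Y, ⨅ x : X, (G t x y : EReal))
    (Xs : ℝ → Set X)
    (hXs : ∀ t, Xs t = {x : X | g t = ⨆ y : Y, (G t x y : EReal)})
    (Ys : ℝ → Set Y)
    (hYs : ∀ t, Ys t = {y : Y | h t = ⨅ x : X, (G t x y : EReal)})
    (S : ℝ → Set (X × Y))
    (hS : ∀ t, S t = {p : X × Y |
      g t = (G t p.1 p.2 : EReal) ∧ (G t p.1 p.2 : EReal) = h t})
    -- (H1) existence of saddle points
    (H1 : ∀ t ∈ Icc (0 : ℝ) τ, (S t).Nonempty)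
    -- (H2) existence of the partial derivative `∂ₜ𝒢 = D` on the relevant sets
    (H2 : ∀ (x : X) (y : Y),
      (((∃ t' ∈ Icc (0 : ℝ) τ, x ∈ Xs t') ∧ y ∈ Ys 0) ∨
        (x ∈ Xs 0 ∧ ∃ t' ∈ Icc (0 : ℝ) τ, y ∈ Ys t')) →
      ∀ t ∈ Icc (0 : ℝ) τ,
        HasDerivWithinAt (fun s : ℝ => G s x y) (D t x y) (Icc (0 : ℝ) τ) t)
    -- (H3) lower semicontinuity along subsequences of minimizers
    (H3 : ∃ tX : TopologicalSpace X, ∀ tn : ℕ → ℝ,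
      (∀ n, tn n ∈ Icc (0 : ℝ) τ) → Tendsto tn atTop (𝓝 (0 : ℝ)) →
      ∃ x0 ∈ Xs 0, ∃ φ : ℕ → ℕ, StrictMono φ ∧ ∃ xk : ℕ → X,
        (∀ k, xk k ∈ Xs (tn (φ k))) ∧
        Tendsto xk atTop (@nhds X tX x0) ∧
        ∀ y ∈ Ys 0, ∀ s : ℕ → ℝ,
          (∀ k, s k ∈ Ioc (0 : ℝ) τ) → Tendsto s atTop (𝓝 (0 : ℝ)) →
          (D 0 x0 y : EReal) ≤
            Filter.liminf (fun k : ℕ => (D (s k) (xk k) y : EReal)) atTop)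
    -- (H4) upper semicontinuity along subsequences of maximizers
    (H4 : ∃ tY : TopologicalSpace Y, ∀ tn : ℕ → ℝ,
      (∀ n, tn n ∈ Icc (0 : ℝ) τ) → Tendsto tn atTop (𝓝 (0 : ℝ)) →
      ∃ y0 ∈ Ys 0, ∃ φ : ℕ → ℕ, StrictMono φ ∧ ∃ yk : ℕ → Y,
        (∀ k, yk k ∈ Ys (tn (φ k))) ∧
        Tendsto yk atTop (@nhds Y tY y0) ∧
        ∀ x ∈ Xs 0, ∀ s : ℕ → ℝ,
          (∀ k, s k ∈ Ioc (0 : ℝ) τ) → Tendsto s atTop (𝓝 (0 : ℝ)) →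
          Filter.limsup (fun k : ℕ => (D (s k) x (yk k) : EReal)) atTop ≤
            (D 0 x y0 : EReal)) :
    ∃ x0 ∈ Xs 0, ∃ y0 ∈ Ys 0,
      Tendsto (fun t : ℝ => ((g t).toReal - (g 0).toReal) / t)
        (𝓝[>] (0 : ℝ)) (𝓝 (D 0 x0 y0)) ∧
      (⨅ x ∈ Xs 0, ⨆ y ∈ Ys 0, (D 0 x y : EReal)) = (D 0 x0 y0 : EReal) ∧
      (⨆ y ∈ Ys 0, ⨅ x ∈ Xs 0, (D 0 x y : EReal)) = (D 0 x0 y0 : EReal) ∧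
      ∀ x ∈ Xs 0, ∀ y ∈ Ys 0, D 0 x0 y ≤ D 0 x0 y0 ∧ D 0 x0 y0 ≤ D 0 x y0 := by
  classical
  obtain ⟨tX, hH3⟩ := H3
  obtain ⟨tY, hH4⟩ := H4
  -- saddle values: g t = h t is a (finite) real
  have hval : ∀ t ∈ Icc (0:ℝ) τ, ∃ r : ℝ, g t = (r : EReal) ∧ h t = (r : EReal) := by
    intro t ht
    obtain ⟨p, hp⟩ := H1 t ht
    rw [hS] at hp
    exact ⟨G t p.1 p.2, hp.1, hp.2.symm⟩
  have h0τ : (0:ℝ) ∈ Icc (0:ℝ) τ := ⟨le_refl 0, hτ.le⟩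
  obtain ⟨r0, hg0, hh0⟩ := hval 0 h0τ
  set Q : ℝ → EReal := fun t => ((((g t).toReal - (g 0).toReal)/t : ℝ) : EReal) with hQdef
  -- mean value theorem step
  have MVT : ∀ (x : X) (y : Y),
      ((∃ t' ∈ Icc (0:ℝ) τ, x ∈ Xs t') ∧ y ∈ Ys 0) ∨
        (x ∈ Xs 0 ∧ ∃ t' ∈ Icc (0:ℝ) τ, y ∈ Ys t') →
      ∀ t ∈ Ioc (0:ℝ) τ, ∃ s ∈ Ioo (0:ℝ) t, G t x y - G 0 x y = D s x y * t := by
    intro x y hxy t ht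
    have hder := H2 x y hxy
    have hsub : Icc (0:ℝ) t ⊆ Icc 0 τ := Icc_subset_Icc_right ht.2
    have hcont : ContinuousOn (fun s => G s x y) (Icc 0 t) :=
      fun u hu => ((hder u (hsub hu)).continuousWithinAt).mono hsub
    have hderiv : ∀ u ∈ Ioo (0:ℝ) t, HasDerivAt (fun s => G s x y) (D u x y) u := by
      intro u hu
      have hu' : u ∈ Icc (0:ℝ) τ := ⟨hu.1.le, (hu.2.trans_le ht.2).le⟩
      exact (hder u hu').hasDerivAt (Icc_mem_nhds hu.1 (hu.2.trans_le ht.2))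
    obtain ⟨c, hc, hceq⟩ := exists_hasDerivAt_eq_slope (fun s => G s x y)
      (fun u => D u x y) ht.1 hcont hderiv
    refine ⟨c, hc, ?_⟩
    rw [hceq, sub_zero, div_mul_cancel₀ _ (ne_of_gt ht.1)]
  -- upper bound on the difference quotient
  have UB : ∀ x ∈ Xs 0, ∀ t ∈ Ioc (0:ℝ) τ, ∀ y ∈ Ys t,
      ∃ s ∈ Ioo (0:ℝ) t, Q t ≤ (D s x y : EReal) := by
    intro x hx t ht y hy
    obtain ⟨rt, hgt, hht⟩ := hval t ⟨ht.1.le, ht.2⟩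
    rw [hXs, mem_setOf_eq] at hx
    rw [hYs, mem_setOf_eq] at hy
    have h1 : rt ≤ G t x y := by
      have h1' : ((rt : EReal)) ≤ (G t x y : EReal) := by
        rw [← hht, hy]
        exact iInf_le _ x
      exact_mod_cast h1'
    have h2 : G 0 x y ≤ r0 := by
      have h2' : (G 0 x y : EReal) ≤ (r0 : EReal) := by
        rw [← hg0, hx]
        exact le_iSup (fun y' => (G 0 x y' : EReal)) y
      exact_mod_cast h2'
    obtain ⟨s, hs, heq⟩ := MVT x y (Or.inr ⟨(hXs 0) ▸ hx, t, ⟨ht.1.le, ht.2⟩, (hYs t) ▸ hy⟩) t ht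
    refine ⟨s, hs, ?_⟩
    have hreal : ((g t).toReal - (g 0).toReal)/t ≤ D s x y := by
      rw [hgt, hg0, EReal.toReal_coe, EReal.toReal_coe]
      rw [div_le_iff₀ ht.1]
      calc rt - r0 ≤ G t x y - G 0 x y := by linarith
        _ = D s x y * t := heq
    exact EReal.coe_le_coe_iff.mpr hreal
  -- lower bound on the difference quotient
  have LB : ∀ y ∈ Ys 0, ∀ t ∈ Ioc (0:ℝ) τ, ∀ x ∈ Xs t,
      ∃ s ∈ Ioo (0:ℝ) t, (D s x y : EReal) ≤ Q t := by
    intro y hy t ht x hx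
    obtain ⟨rt, hgt, hht⟩ := hval t ⟨ht.1.le, ht.2⟩
    rw [hXs, mem_setOf_eq] at hx
    rw [hYs, mem_setOf_eq] at hy
    have h1 : G t x y ≤ rt := by
      have h1' : (G t x y : EReal) ≤ ((rt : EReal)) := by
        rw [← hgt, hx]
        exact le_iSup (fun y' => (G t x y' : EReal)) y
      exact_mod_cast h1'
    have h2 : r0 ≤ G 0 x y := by
      have h2' : ((r0 : EReal)) ≤ (G 0 x y : EReal) := by
        rw [← hh0, hy]
        exact iInf_le _ x
      exact_mod_cast h2'
    obtain ⟨s, hs, heq⟩ := MVT x y (Or.inl ⟨⟨t, ⟨ht.1.le, ht.2⟩, (hXs t) ▸ hx⟩, (hYs 0) ▸ hy⟩) t ht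
    refine ⟨s, hs, ?_⟩
    have hreal : D s x y ≤ ((g t).toReal - (g 0).toReal)/t := by
      rw [hgt, hg0, EReal.toReal_coe, EReal.toReal_coe]
      rw [le_div_iff₀ ht.1]
      calc D s x y * t = G t x y - G 0 x y := heq.symm
        _ ≤ rt - r0 := by linarith
    exact EReal.coe_le_coe_iff.mpr hreal
  -- limsup lemma along sequences, from (H4)
  have LS : ∀ tn : ℕ → ℝ, (∀ n, tn n ∈ Ioc (0:ℝ) τ) → Tendsto tn atTop (𝓝 0) →
      ∃ y0 ∈ Ys 0, ∃ φ : ℕ → ℕ, StrictMono φ ∧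
        (∀ x ∈ Xs 0, limsup (fun k => Q (tn (φ k))) atTop ≤ (D 0 x y0 : EReal)) := by
    intro tn htn htn0
    obtain ⟨y0, hy0, φ, hφ, yk, hyk, -, hsc⟩ :=
      hH4 tn (fun n => ⟨(htn n).1.le, (htn n).2⟩) htn0
    refine ⟨y0, hy0, φ, hφ, fun x hx => ?_⟩
    have hsel : ∀ k, ∃ s ∈ Ioo (0:ℝ) (tn (φ k)), Q (tn (φ k)) ≤ (D s x (yk k) : EReal) :=
      fun k => UB x hx (tn (φ k)) (htn (φ k)) (yk k) (hyk k)
    choose s hs hQs using hsel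
    have hsIoc : ∀ k, s k ∈ Ioc (0:ℝ) τ :=
      fun k => ⟨(hs k).1, (hs k).2.le.trans (htn (φ k)).2⟩
    have htnφ : Tendsto (fun k => tn (φ k)) atTop (𝓝 0) := htn0.comp hφ.tendsto_atTop
    have hs0 : Tendsto s atTop (𝓝 0) :=
      tendsto_of_tendsto_of_tendsto_of_le_of_le tendsto_const_nhds htnφ
        (fun k => (hs k).1.le) (fun k => (hs k).2.le)
    calc limsup (fun k => Q (tn (φ k))) atTop
        ≤ limsup (fun k => (D (s k) x (yk k) : EReal)) atTop :=
          limsup_le_limsup (Eventually.of_forall hQs)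
      _ ≤ (D 0 x y0 : EReal) := hsc x hx s hsIoc hs0
  -- liminf lemma along sequences, from (H3)
  have LI : ∀ tn : ℕ → ℝ, (∀ n, tn n ∈ Ioc (0:ℝ) τ) → Tendsto tn atTop (𝓝 0) →
      ∃ x0 ∈ Xs 0, ∃ φ : ℕ → ℕ, StrictMono φ ∧
        (∀ y ∈ Ys 0, (D 0 x0 y : EReal) ≤ liminf (fun k => Q (tn (φ k))) atTop) := by
    intro tn htn htn0
    obtain ⟨x0, hx0, φ, hφ, xk, hxk, -, hsc⟩ :=
      hH3 tn (fun n => ⟨(htn n).1.le, (htn n).2⟩) htn0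
    refine ⟨x0, hx0, φ, hφ, fun y hy => ?_⟩
    have hsel : ∀ k, ∃ s ∈ Ioo (0:ℝ) (tn (φ k)), (D s (xk k) y : EReal) ≤ Q (tn (φ k)) :=
      fun k => LB y hy (tn (φ k)) (htn (φ k)) (xk k) (hxk k)
    choose s hs hQs using hsel
    have hsIoc : ∀ k, s k ∈ Ioc (0:ℝ) τ :=
      fun k => ⟨(hs k).1, (hs k).2.le.trans (htn (φ k)).2⟩
    have htnφ : Tendsto (fun k => tn (φ k)) atTop (𝓝 0) := htn0.comp hφ.tendsto_atTop
    have hs0 : Tendsto s atTop (𝓝 0) :=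
      tendsto_of_tendsto_of_tendsto_of_le_of_le tendsto_const_nhds htnφ
        (fun k => (hs k).1.le) (fun k => (hs k).2.le)
    calc (D 0 x0 y : EReal) ≤ liminf (fun k => (D (s k) (xk k) y : EReal)) atTop :=
          hsc y hy s hsIoc hs0
      _ ≤ liminf (fun k => Q (tn (φ k))) atTop :=
          liminf_le_liminf (Eventually.of_forall hQs)
  -- the two candidate values
  set Iinf : EReal := ⨅ x ∈ Xs 0, ⨆ y ∈ Ys 0, (D 0 x y : EReal) with hIinf_def
  set Ssup : EReal := ⨆ y ∈ Ys 0, ⨅ x ∈ Xs 0, (D 0 x y : EReal) with hSsup_def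
  have hSI : Ssup ≤ Iinf := by
    refine le_iInf₂ fun x hx => iSup₂_le fun y hy => ?_
    exact le_trans (iInf₂_le x hx) (le_iSup₂ (f := fun y' _ => (D 0 x y' : EReal)) y hy)
  set F := 𝓝[>] (0:ℝ) with hFdef
  have hF : Ioc (0:ℝ) τ ∈ F := Ioc_mem_nhdsGT_of_mem ⟨le_refl 0, hτ⟩
  -- limsup over the filter is at most Ssup
  have hLsup : limsup Q F ≤ Ssup := by
    by_contra hlt
    push_neg at hlt
    obtain ⟨c, hc1, hc2⟩ := exists_between hlt
    have hfreq : ∃ᶠ t in F, c < Q t ∧ t ∈ Ioc (0:ℝ) τ :=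
      (frequently_lt_of_lt_limsup (by isBoundedDefault) hc2).and_eventually
        (eventually_of_mem hF fun t ht => ht)
    obtain ⟨tn, htnF, htnp⟩ := exists_seq_forall_of_frequently hfreq
    have htn0 : Tendsto tn atTop (𝓝 0) := htnF.mono_right nhdsWithin_le_nhds
    obtain ⟨y0, hy0, φ, hφ, hlim⟩ := LS tn (fun n => (htnp n).2) htn0
    have h1 : c ≤ limsup (fun k => Q (tn (φ k))) atTop :=
      le_limsup_of_frequently_le
        (Frequently.of_forall fun k => ((htnp (φ k)).1).le) (by isBoundedDefault)
    have h2 : limsup (fun k => Q (tn (φ k))) atTop ≤ Ssup :=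
      (le_iInf₂ fun x hx => hlim x hx).trans
        (le_iSup₂ (f := fun y _ => ⨅ x ∈ Xs 0, (D 0 x y : EReal)) y0 hy0)
    exact absurd (h1.trans h2) (not_le.mpr hc1)
  -- liminf over the filter is at least Iinf
  have hLinf : Iinf ≤ liminf Q F := by
    by_contra hlt
    push_neg at hlt
    obtain ⟨c, hc1, hc2⟩ := exists_between hlt
    have hfreq : ∃ᶠ t in F, Q t < c ∧ t ∈ Ioc (0:ℝ) τ :=
      (frequently_lt_of_liminf_lt (by isBoundedDefault) hc1).and_eventually
        (eventually_of_mem hF fun t ht => ht)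
    obtain ⟨tn, htnF, htnp⟩ := exists_seq_forall_of_frequently hfreq
    have htn0 : Tendsto tn atTop (𝓝 0) := htnF.mono_right nhdsWithin_le_nhds
    obtain ⟨x0, hx0, φ, hφ, hlim⟩ := LI tn (fun n => (htnp n).2) htn0
    have h1 : liminf (fun k => Q (tn (φ k))) atTop ≤ c :=
      liminf_le_of_frequently_le
        (Frequently.of_forall fun k => ((htnp (φ k)).1).le) (by isBoundedDefault)
    have h2 : Iinf ≤ liminf (fun k => Q (tn (φ k))) atTop :=
      (iInf₂_le x0 hx0).trans (iSup₂_le fun y hy => hlim y hy)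
    exact absurd (h2.trans h1) (not_le.mpr hc2)
  have hFle : liminf Q F ≤ limsup Q F := liminf_le_limsup
  -- everything collapses
  have hIeqS : Iinf = Ssup :=
    le_antisymm (hLinf.trans (hFle.trans hLsup)) hSI
  have hliminf_eq : liminf Q F = Ssup :=
    le_antisymm (hFle.trans hLsup) (hIeqS ▸ hLinf)
  have hlimsup_eq : limsup Q F = Ssup :=
    le_antisymm hLsup (hIeqS ▸ (hLinf.trans hFle))
  -- a specific sequence to extract the saddle point
  have htseq0 : Tendsto (fun n : ℕ => τ / ((n:ℝ) + 1)) atTop (𝓝 0) := by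
    have hden : Tendsto (fun n : ℕ => ((n:ℝ) + 1)) atTop atTop :=
      tendsto_atTop_add_const_right atTop 1 tendsto_natCast_atTop_atTop
    exact hden.const_div_atTop τ
  have htseqIoc : ∀ n : ℕ, τ / ((n:ℝ) + 1) ∈ Ioc (0:ℝ) τ := by
    intro n
    constructor
    · positivity
    · apply div_le_self hτ.le
      have : (0:ℝ) ≤ (n:ℝ) := Nat.cast_nonneg n
      linarith
  have htseqF : Tendsto (fun n : ℕ => τ / ((n:ℝ) + 1)) atTop F := by
    refine tendsto_nhdsWithin_of_tendsto_nhds_of_eventually_within _ htseq0 ?_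
    exact Eventually.of_forall fun n => (htseqIoc n).1
  obtain ⟨y0, hy0, φ1, hφ1, hlim1⟩ := LS _ htseqIoc htseq0
  obtain ⟨x0, hx0, φ2, hφ2, hlim2⟩ := LI _ htseqIoc htseq0
  -- liminf/limsup along the subsequences are squeezed to Ssup
  have hmap1 : map (fun k => τ / ((φ1 k : ℝ) + 1)) atTop ≤ F := by
    have : Tendsto ((fun n : ℕ => τ / ((n:ℝ) + 1)) ∘ φ1) atTop F :=
      htseqF.comp hφ1.tendsto_atTop
    exact this
  have hmap2 : map (fun k => τ / ((φ2 k : ℝ) + 1)) atTop ≤ F := by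
    have : Tendsto ((fun n : ℕ => τ / ((n:ℝ) + 1)) ∘ φ2) atTop F :=
      htseqF.comp hφ2.tendsto_atTop
    exact this
  have hsub1 : Ssup ≤ liminf (fun k => Q (τ / ((φ1 k : ℝ) + 1))) atTop := by
    rw [← hliminf_eq]
    exact liminf_le_liminf_of_le hmap1
  have hsub2 : limsup (fun k => Q (τ / ((φ2 k : ℝ) + 1))) atTop ≤ Ssup := by
    rw [← hlimsup_eq]
    exact limsup_le_limsup_of_le hmap2
  -- inf over Xs 0 of D 0 x y0 equals Ssup
  have hinf_eq : (⨅ x ∈ Xs 0, (D 0 x y0 : EReal)) = Ssup := by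
    refine le_antisymm ?_ ?_
    · exact le_iSup₂ (f := fun y _ => ⨅ x ∈ Xs 0, (D 0 x y : EReal)) y0 hy0
    · have hll : liminf (fun k => Q (τ / ((φ1 k : ℝ) + 1))) atTop ≤
          limsup (fun k => Q (τ / ((φ1 k : ℝ) + 1))) atTop := liminf_le_limsup
      exact le_trans (hsub1.trans hll) (le_iInf₂ fun x hx => hlim1 x hx)
  have hsup_eq : (⨆ y ∈ Ys 0, (D 0 x0 y : EReal)) = Ssup := by
    refine le_antisymm ?_ ?_
    · have hll : liminf (fun k => Q (τ / ((φ2 k : ℝ) + 1))) atTop ≤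
          limsup (fun k => Q (τ / ((φ2 k : ℝ) + 1))) atTop := liminf_le_limsup
      exact (iSup₂_le fun y hy => hlim2 y hy).trans (hll.trans hsub2)
    · rw [← hIeqS]
      exact le_trans (iInf₂_le x0 hx0) le_rfl
  -- the saddle value
  have hD_le : (D 0 x0 y0 : EReal) ≤ Ssup := by
    rw [← hsup_eq]
    exact le_iSup₂ (f := fun y _ => (D 0 x0 y : EReal)) y0 hy0
  have hD_ge : Ssup ≤ (D 0 x0 y0 : EReal) := by
    rw [← hinf_eq]
    exact iInf₂_le x0 hx0
  have hDeq : (D 0 x0 y0 : EReal) = Ssup := le_antisymm hD_le hD_ge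
  refine ⟨x0, hx0, y0, hy0, ?_, ?_, ?_, ?_⟩
  · -- tendsto
    have htends : Tendsto Q F (𝓝 ((D 0 x0 y0 : ℝ) : EReal)) := by
      refine tendsto_of_liminf_eq_limsup ?_ ?_
      · rw [hliminf_eq, ← hDeq]
      · rw [hlimsup_eq, ← hDeq]
    exact EReal.tendsto_coe.mp htends
  · rw [hIeqS]; exact hDeq.symm
  · exact hDeq.symm
  · intro x hx y hy
    constructor
    · have h1 : (D 0 x0 y : EReal) ≤ (D 0 x0 y0 : EReal) := by
        rw [hDeq, ← hsup_eq]
        exact le_iSup₂ (f := fun y' _ => (D 0 x0 y' : EReal)) y hy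
      exact_mod_cast h1
    · have h1 : (D 0 x0 y0 : EReal) ≤ (D 0 x y0 : EReal) := by
        rw [hDeq, ← hinf_eq]
        exact iInf₂_le x hx
      exact_mod_cast h1
end
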